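/- Let m ≥ 0 and let λ ∈ ℂ with λ ∉ [−√(m²+4), −m] ∪ [m, √(m²+4)]. Then there exists exactly one k ∈ ℂ with 0 < |k| < 1 such that λ² = m² + 2 − k − k⁻¹. -/

import Mathlib

open scoped ComplexOrder
open Matrix

noncomputable section

abbrev Mat2 : Type := Matrix (Fin 2) (Fin 2) ℂ
abbrev Vec2 : Type := EuclideanSpace ℂ (Fin 2)
abbrev Hsp : Type := lp (fun _ : ℤ => Vec2) 2

/-- A `2×2` complex matrix acting on `ℂ²` as a continuous linear map. -/
def mAct (A : Mat2) : Vec2 →L[ℂ] Vec2 := Matrix.toEuclideanCLM (𝕜 := ℂ) A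

/-- The spectral (operator) norm of a `2×2` complex matrix. -/
def specNorm (A : Mat2) : ℝ := ‖mAct A‖

/-- The Hilbert–Schmidt (Frobenius) norm of a `2×2` complex matrix. -/
def hsNorm (A : Mat2) : ℝ := Real.sqrt (∑ i, ∑ j, ‖A i j‖ ^ 2)

def bMat (m : ℝ) : Mat2 := !![(-m : ℂ), 1; 1, (m : ℂ)]

def aMat : Mat2 := !![0, 0; -1, 0]

/-- `D0` is the free discrete Dirac operator with mass `m`. -/
def IsFreeDirac (m : ℝ) (D0 : Hsp →L[ℂ] Hsp) : Prop :=
  ∀ u : Hsp, ∀ n : ℤ,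
    (D0 u) n = mAct aMat.transpose (u (n - 1)) + mAct (bMat m) (u n) + mAct aMat (u (n + 1))

/-- `Vop` is the block-diagonal operator with blocks `υ n`. -/
def IsBlockDiagOp (υ : ℤ → Mat2) (Vop : Hsp →L[ℂ] Hsp) : Prop :=
  ∀ u : Hsp, ∀ n : ℤ, (Vop u) n = mAct (υ n) (u n)

/-- The spectrum `[−√(m²+4), −m] ∪ [m, √(m²+4)]` as a subset of `ℂ`. -/
def sigma0 (m : ℝ) : Set ℂ :=
  Complex.ofReal '' (Set.Icc (-Real.sqrt (m ^ 2 + 4)) (-m) ∪ Set.Icc m (Real.sqrt (m ^ 2 + 4)))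

def T0mat (m : ℝ) (lam k : ℂ) : Mat2 :=
  (k⁻¹ - k)⁻¹ • !![lam - m, 1 - k; 1 - k, lam + m]

def T1mat (m : ℝ) (lam k : ℂ) : Mat2 :=
  (k * (k⁻¹ - k)⁻¹) • !![lam - m, 1 - k; 1 - k⁻¹, lam + m]

def Tmat (m : ℝ) (lam k : ℂ) : ℤ → Mat2 := fun j =>
  if j = 0 then T0mat m lam k
  else if 0 < j then k ^ (j.toNat - 1) • T1mat m lam k
  else (k ^ ((-j).toNat - 1) • T1mat m lam k).transpose

/-- The positive semidefinite square root of a positive semidefinite matrix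
(the definition `Matrix.PosSemidef.sqrt` of the older Mathlib, since removed). -/
def Matrix.PosSemidef.sqrt {n : Type*} [Fintype n] [DecidableEq n] {A : Matrix n n ℂ}
    (hA : A.PosSemidef) : Matrix n n ℂ :=
  hA.1.eigenvectorUnitary.1 * diagonal ((↑) ∘ (Real.sqrt ·) ∘ hA.1.eigenvalues) *
  (star hA.1.eigenvectorUnitary : Matrix n n ℂ)

theorem Matrix.PosSemidef.posSemidef_sqrt {n : Type*} [Fintype n] [DecidableEq n]
    {A : Matrix n n ℂ} (hA : A.PosSemidef) : hA.sqrt.PosSemidef := by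
  unfold Matrix.PosSemidef.sqrt
  have h : (star hA.1.eigenvectorUnitary : Matrix n n ℂ) = (hA.1.eigenvectorUnitary.1)ᴴ := by
    exact Matrix.star_eq_conjTranspose _
  rw [h]
  apply Matrix.PosSemidef.mul_mul_conjTranspose_same
  rw [Matrix.posSemidef_diagonal_iff]
  intro i
  simp only [Function.comp_apply]
  first
  | exact Complex.zero_le_real.mpr (Real.sqrt_nonneg _)
  | exact_mod_cast Real.sqrt_nonneg _

def wMat (υ : ℤ → Mat2) (n : ℤ) : Mat2 :=
  (Matrix.posSemidef_conjTranspose_mul_self (υ n)).sqrt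

def sqrtwMat (υ : ℤ → Mat2) (n : ℤ) : Mat2 :=
  (Matrix.posSemidef_conjTranspose_mul_self (υ n)).posSemidef_sqrt.sqrt

/-- The Birman–Schwinger operator `K(z) = √W (D₀ − z)⁻¹ U √W`. -/
def Kop (D0 sW Uop : Hsp →L[ℂ] Hsp) (z : ℂ) : Hsp →L[ℂ] Hsp :=
  sW * Ring.inverse (D0 - z • (1 : Hsp →L[ℂ] Hsp)) * Uop * sW

/-- The element of `ℓ²(ℤ, ℂ²)` supported at site `j` equal to the `β`-th standard basis vector. -/
def deltaVec (j : ℤ) (β : Fin 2) : Hsp := lp.single 2 j (EuclideanSpace.single β (1 : ℂ))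

/-!
Putting `w = m² + 2 − λ²`, the equation reads `k + k⁻¹ = w`, i.e. `k² − w k + 1 = 0`. Its two
roots are `k` and `k⁻¹`, so exactly one lies in the open unit disk unless both lie on the unit
circle. But for `‖k‖ = 1` one has `k⁻¹ = conj k`, so `w = 2 Re k ∈ [−2, 2]`, which means
`λ² ∈ [m², m² + 4]`, i.e. `λ ∈ [−√(m²+4), −m] ∪ [m, √(m²+4)]`.
-/

theorem eq_or_eq_inv_of_add_inv_eq_add_inv {K : Type*} [Field K] {b k : K} (hb : b ≠ 0)
    (hk : k ≠ 0) (h : b + b⁻¹ = k + k⁻¹) : b = k ∨ b = k⁻¹ := by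
  have hfactor : (b - k) * (b - k⁻¹) = 0 := by
    field_simp at h ⊢
    linear_combination h
  rcases mul_eq_zero.mp hfactor with h | h
  · exact Or.inl (sub_eq_zero.mp h)
  · exact Or.inr (sub_eq_zero.mp h)

namespace Complex

theorem exists_add_inv_eq (w : ℂ) : ∃ k : ℂ, k ≠ 0 ∧ k + k⁻¹ = w := by
  obtain ⟨d, hd⟩ : ∃ d : ℂ, d ^ 2 = w ^ 2 - 4 :=
    IsAlgClosed.exists_pow_nat_eq _ two_pos
  have hprod : (w + d) / 2 * ((w - d) / 2) = 1 := by linear_combination (-1 / 4 : ℂ) * hd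
  refine ⟨(w + d) / 2, left_ne_zero_of_mul_eq_one hprod, ?_⟩
  rw [← eq_inv_of_mul_eq_one_right hprod]
  ring

theorem add_inv_eq_ofReal_of_norm_eq_one {k : ℂ} (hk : ‖k‖ = 1) :
    k + k⁻¹ = ((2 * k.re : ℝ) : ℂ) ∧ |2 * k.re| ≤ 2 := by
  refine ⟨by rw [inv_eq_conj hk, add_conj], ?_⟩
  rw [abs_mul, abs_two]
  linarith [abs_re_le_norm k]

theorem exists_norm_lt_one_add_inv_eq {w : ℂ} (hw : ∀ t : ℝ, |t| ≤ 2 → w ≠ t) :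
    ∃ k : ℂ, k ≠ 0 ∧ ‖k‖ < 1 ∧ k + k⁻¹ = w := by
  obtain ⟨k, hk0, hkw⟩ := exists_add_inv_eq w
  have hk1 : ‖k‖ ≠ 1 := fun h1 ↦ by
    obtain ⟨hreal, hle⟩ := add_inv_eq_ofReal_of_norm_eq_one h1
    exact hw _ hle (hkw ▸ hreal)
  rcases hk1.lt_or_gt with hlt | hgt
  · exact ⟨k, hk0, hlt, hkw⟩
  · refine ⟨k⁻¹, inv_ne_zero hk0, ?_, ?_⟩
    · rw [norm_inv]
      exact inv_lt_one_of_one_lt₀ hgt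
    · rw [inv_inv, add_comm, hkw]

theorem existsUnique_add_inv_eq {w : ℂ} (hw : ∀ t : ℝ, |t| ≤ 2 → w ≠ t) :
    ∃! k : ℂ, (0 < ‖k‖ ∧ ‖k‖ < 1) ∧ k + k⁻¹ = w := by
  obtain ⟨k, hk0, hk1, hkw⟩ := exists_norm_lt_one_add_inv_eq hw
  have hk_pos : 0 < ‖k‖ := norm_pos_iff.mpr hk0
  refine ⟨k, ⟨⟨hk_pos, hk1⟩, hkw⟩, fun b ⟨⟨hb0, hb1⟩, hbw⟩ ↦ ?_⟩
  refine (eq_or_eq_inv_of_add_inv_eq_add_inv (norm_pos_iff.mp hb0) hk0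
    (hbw.trans hkw.symm)).resolve_right fun hb ↦ ?_
  have : 1 < ‖k⁻¹‖ := by
    rw [norm_inv]
    exact (one_lt_inv₀ hk_pos).mpr hk1
  exact (hb ▸ hb1).not_gt this

end Complex

theorem mem_sigma0_of_sq_eq {m s : ℝ} {lam : ℂ} (hs₁ : m ^ 2 ≤ s) (hs₂ : s ≤ m ^ 2 + 4)
    (h : lam ^ 2 = s) : lam ∈ sigma0 m := by
  have hsqrt : lam ^ 2 = (√s : ℂ) ^ 2 := by
    rw [h, ← Complex.ofReal_pow, Real.sq_sqrt ((sq_nonneg m).trans hs₁)]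
  have hlow : m ≤ √s := (le_abs_self m).trans (Real.abs_le_sqrt hs₁)
  have hupp : √s ≤ √(m ^ 2 + 4) := Real.sqrt_le_sqrt hs₂
  rcases sq_eq_sq_iff_eq_or_eq_neg.mp hsqrt with rfl | rfl
  · exact ⟨√s, Or.inr ⟨hlow, hupp⟩, rfl⟩
  · exact ⟨-√s, Or.inl ⟨neg_le_neg hupp, neg_le_neg hlow⟩, by push_cast; rfl⟩

theorem stmt14_general (m : ℝ) (lam : ℂ) (hlam : lam ∉ sigma0 m) :
    ∃! k : ℂ, (0 < ‖k‖ ∧ ‖k‖ < 1) ∧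
      lam ^ 2 = (m : ℂ) ^ 2 + 2 - k - k⁻¹ := by
  have hw : ∀ t : ℝ, |t| ≤ 2 → (m : ℂ) ^ 2 + 2 - lam ^ 2 ≠ t := fun t ht heq ↦ by
    obtain ⟨ht₁, ht₂⟩ := abs_le.mp ht
    refine hlam (mem_sigma0_of_sq_eq (s := m ^ 2 + 2 - t) (by linarith) (by linarith) ?_)
    push_cast
    linear_combination -heq
  refine (existsUnique_congr fun k ↦ and_congr_right' ?_).mp (Complex.existsUnique_add_inv_eq hw)
  exact ⟨fun h ↦ by linear_combination h, fun h ↦ by linear_combination h⟩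

/-- For `λ` outside `[−√(m²+4), −m] ∪ [m, √(m²+4)]` there is exactly one `k` with
`0 < |k| < 1` and `λ² = m² + 2 − k − k⁻¹`. -/
theorem stmt14 (m : ℝ) (hm : 0 ≤ m) (lam : ℂ) (hlam : lam ∉ sigma0 m) :
    ∃! k : ℂ, (0 < ‖k‖ ∧ ‖k‖ < 1) ∧
      lam ^ 2 = (m : ℂ) ^ 2 + 2 - k - k⁻¹ :=
  stmt14_general m lam hlam
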